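/- Let g be a real Lie algebra with a hypercomplex structure (I,J,K) and Obata connection ∇, and let α ∈ g* be a ∇-parallel 1-form. Then α vanishes on H[g,g]: α(z) = 0 for every z ∈ span([g,g] ∪ I[g,g] ∪ J[g,g] ∪ K[g,g]). -/

import Mathlib

open Submodule

section Hyper

variable {L : Type*} [LieRing L] [LieAlgebra ℝ L]

/-- A complex structure operator on a real Lie algebra: `I² = -id` and the integrability
identity `[IX,IY] = [X,Y] + I[IX,Y] + I[X,IY]` (equivalent to `g^{1,0}` being a subalgebra). -/
def IsComplexStructureOp (I : L →ₗ[ℝ] L) : Prop :=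
  (∀ x, I (I x) = -x) ∧ ∀ x y : L, ⁅I x, I y⁆ = ⁅x, y⁆ + I ⁅I x, y⁆ + I ⁅x, I y⁆

/-- A hypercomplex structure: a triple of complex structure operators with `IJ = K`
(together with `I² = J² = K² = -id` this gives the quaternionic relations). -/
structure IsHypercomplex (I J K : L →ₗ[ℝ] L) : Prop where
  hI : IsComplexStructureOp I
  hJ : IsComplexStructureOp J
  hK : IsComplexStructureOp K
  hIJ : ∀ x, I (J x) = K x

/-- The Obata connection `∇_X` as an endomorphism of `L`:
`∇_X Y = ½([X,Y] + I[IX,Y] − J[X,JY] + K[IX,JY])`. -/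
noncomputable def obataOp (I J K : L →ₗ[ℝ] L) (X : L) : Module.End ℝ L :=
  (1/2 : ℝ) • (LieAlgebra.ad ℝ L X + I ∘ₗ LieAlgebra.ad ℝ L (I X)
    - J ∘ₗ LieAlgebra.ad ℝ L X ∘ₗ J + K ∘ₗ LieAlgebra.ad ℝ L (I X) ∘ₗ J)

/-- Flatness of the Obata connection. -/
def ObataFlat (I J K : L →ₗ[ℝ] L) : Prop :=
  ∀ X Y Z : L, obataOp I J K X (obataOp I J K Y Z) - obataOp I J K Y (obataOp I J K X Z)
    = obataOp I J K ⁅X, Y⁆ Z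

/-- The set of brackets of elements of a subspace `W`. -/
def bracketSet (W : Submodule ℝ L) : Set L := {z : L | ∃ x ∈ W, ∃ y ∈ W, z = ⁅x, y⁆}

/-- `H[W,W] = span([W,W] ∪ I[W,W] ∪ J[W,W] ∪ K[W,W])`. -/
def Hbr (I J K : L →ₗ[ℝ] L) (W : Submodule ℝ L) : Submodule ℝ L :=
  span ℝ (bracketSet W ∪ I '' bracketSet W ∪ J '' bracketSet W ∪ K '' bracketSet W)

/-- The descending series `g_0^H = g`, `g_i^H = H[g_{i-1}^H, g_{i-1}^H]`. -/
def gH (I J K : L →ₗ[ℝ] L) : ℕ → Submodule ℝ L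
  | 0 => ⊤
  | i + 1 => Hbr I J K (gH I J K i)

end Hyper

/-! The Obata connection is torsion-free and commutes with `I`, `J`, `K`. Hence for
`A ∈ {1, I, J, K}` one has `A[X,Y] = ∇_X (AY) - ∇_Y (AX)`, and a parallel form kills the
right-hand side. -/

section TorsionFree

variable {R L M : Type*} [CommRing R] [LieRing L] [LieAlgebra R L] [AddCommGroup M] [Module R M]
  {D : L → Module.End R L} {A : Module.End R L}

theorem map_lie_eq_sub_of_torsionFree (hD : ∀ X Y, D X Y - D Y X = ⁅X, Y⁆)
    (hA : ∀ X Y, D X (A Y) = A (D X Y)) (X Y : L) :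
    A ⁅X, Y⁆ = D X (A Y) - D Y (A X) := by
  rw [← hD, map_sub, hA, hA]

theorem apply_map_lie_eq_zero_of_parallel (hD : ∀ X Y, D X Y - D Y X = ⁅X, Y⁆)
    (hA : ∀ X Y, D X (A Y) = A (D X Y)) {α : L →ₗ[R] M} (hα : ∀ X Y, α (D X Y) = 0)
    (X Y : L) :
    α (A ⁅X, Y⁆) = 0 := by
  rw [map_lie_eq_sub_of_torsionFree hD hA, map_sub, hα, hα, sub_zero]

end TorsionFree

section Obata

variable {L : Type*} [LieRing L] [LieAlgebra ℝ L]

structure IsAlmostHypercomplex (I J K : L →ₗ[ℝ] L) : Prop where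
  I_I : ∀ x, I (I x) = -x
  J_J : ∀ x, J (J x) = -x
  K_K : ∀ x, K (K x) = -x
  I_J : ∀ x, I (J x) = K x

theorem IsHypercomplex.isAlmostHypercomplex {I J K : L →ₗ[ℝ] L} (h : IsHypercomplex I J K) :
    IsAlmostHypercomplex I J K :=
  ⟨h.hI.1, h.hJ.1, h.hK.1, h.hIJ⟩

namespace IsAlmostHypercomplex

variable {I J K : L →ₗ[ℝ] L} (h : IsAlmostHypercomplex I J K) (x : L)
include h

theorem I_K : I (K x) = -J x := by
  rw [← h.I_J, h.I_I]

theorem K_J : K (J x) = -I x := by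
  rw [← h.I_J, h.J_J, map_neg]

theorem J_I : J (I x) = -K x := by
  have J_I_J : ∀ y, J (I (J y)) = I y := fun y => calc
    J (I (J y)) = -I (I (J (I (J y)))) := by rw [h.I_I, neg_neg]
    _ = -I (K (K y)) := by rw [h.I_J, h.I_J]
    _ = I y := by rw [h.K_K, map_neg, neg_neg]
  calc J (I x) = J (I (J (-J x))) := by rw [map_neg, h.J_J, neg_neg]
    _ = -K x := by rw [J_I_J, map_neg, h.I_J]

theorem K_I : K (I x) = J x := by
  rw [← h.I_J, h.J_I, map_neg, h.I_K, neg_neg]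

theorem J_K : J (K x) = I x := by
  rw [← h.I_J, h.J_I, h.K_J, neg_neg]

end IsAlmostHypercomplex

theorem obataOp_apply (I J K : L →ₗ[ℝ] L) (X Y : L) :
    obataOp I J K X Y = (1 / 2 : ℝ) • (⁅X, Y⁆ + I ⁅I X, Y⁆ - J ⁅X, J Y⁆ + K ⁅I X, J Y⁆) := by
  simp [obataOp]

theorem obataOp_sub_obataOp_swap {I J K : L →ₗ[ℝ] L} (h : IsHypercomplex I J K) (X Y : L) :
    obataOp I J K X Y - obataOp I J K Y X = ⁅X, Y⁆ := by
  have hq := h.isAlmostHypercomplex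
  have hI := h.hI.2 X Y
  have hJ := h.hJ.2 X Y
  have hK := congrArg K (h.hK.2 (J X) (I Y))
  simp only [map_add, map_neg, neg_lie, h.hK.1, hq.K_J, hq.K_I, neg_neg] at hK
  rw [obataOp_apply, obataOp_apply, ← lie_skew Y X, ← lie_skew (I Y) X, ← lie_skew Y (J X),
    ← lie_skew (I Y) (J X), map_neg, map_neg, map_neg]
  linear_combination (norm := module)
    (-(1 / 2 : ℝ)) • hI + (1 / 2 : ℝ) • hJ - (1 / 2 : ℝ) • hK

theorem obataOp_apply_J {I J K : L →ₗ[ℝ] L} (hq : IsAlmostHypercomplex I J K) (X Y : L) :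
    obataOp I J K X (J Y) = J (obataOp I J K X Y) := by
  simp only [obataOp_apply, map_smul, map_add, map_sub, hq.J_J, hq.J_I, hq.J_K, lie_neg,
    map_neg]
  module

theorem obataOp_apply_I {I J K : L →ₗ[ℝ] L} (hq : IsAlmostHypercomplex I J K)
    (hI : IsComplexStructureOp I) (X Y : L) :
    obataOp I J K X (I Y) = I (obataOp I J K X Y) := by
  have h₁ := congrArg I (hI.2 X Y)
  have h₂ := congrArg K (hI.2 X (J Y))
  simp only [map_add, hq.I_I, hq.I_J, hq.K_I] at h₁ h₂
  simp only [obataOp_apply, map_smul, map_add, map_sub, hq.I_I, hq.I_J, hq.I_K, hq.J_I, lie_neg,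
    map_neg]
  linear_combination (norm := module) (1 / 2 : ℝ) • h₁ - (1 / 2 : ℝ) • h₂

theorem obataOp_apply_K {I J K : L →ₗ[ℝ] L} (hq : IsAlmostHypercomplex I J K)
    (hI : IsComplexStructureOp I) (X Y : L) :
    obataOp I J K X (K Y) = K (obataOp I J K X Y) := by
  have h₁ := congrArg I (hI.2 X (J Y))
  have h₂ := congrArg K (hI.2 X Y)
  simp only [map_add, hq.I_I, hq.I_J, hq.K_I] at h₁ h₂
  simp only [obataOp_apply, map_smul, map_add, map_sub, hq.K_K, hq.K_I, hq.K_J, hq.J_K]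
  linear_combination (norm := module) (1 / 2 : ℝ) • h₁ + (1 / 2 : ℝ) • h₂

end Obata

/-- every Obata-parallel 1-form vanishes on `H[g,g]`. -/
theorem parallel_form_vanishes_on_Hbr {L : Type*} [LieRing L] [LieAlgebra ℝ L]
    (I J K : L →ₗ[ℝ] L) (h : IsHypercomplex I J K)
    (α : L →ₗ[ℝ] ℝ) (hpar : ∀ X Y : L, α (obataOp I J K X Y) = 0) :
    ∀ z ∈ Hbr I J K ⊤, α z = 0 := by
  have hq := h.isAlmostHypercomplex
  have key : ∀ A : Module.End ℝ L, (∀ X Y, obataOp I J K X (A Y) = A (obataOp I J K X Y)) →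
      A '' bracketSet ⊤ ⊆ (LinearMap.ker α : Set L) := by
    rintro A hA _ ⟨_, ⟨X, -, Y, -, rfl⟩, rfl⟩
    exact apply_map_lie_eq_zero_of_parallel (obataOp_sub_obataOp_swap h) hA hpar X Y
  have hbr : bracketSet ⊤ ⊆ (LinearMap.ker α : Set L) := by
    simpa using key 1 fun _ _ => rfl
  intro z hz
  refine LinearMap.mem_ker.1 <| span_le.2 ?_ hz
  exact Set.union_subset (Set.union_subset (Set.union_subset hbr
    (key I (obataOp_apply_I hq h.hI))) (key J (obataOp_apply_J hq)))
    (key K (obataOp_apply_K hq h.hI))
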